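/- Let P and Q be nonzero integers with D = P^2 - 4Q ≠ 0, let U = U(P,Q) be nondegenerate, and let p be an odd prime with p ∣ D and p ∤ gcd(P,Q). Then for every integer k ≥ 1, with k ≥ 2 required in the case p = 3, one has M^U_{p^k} ≡ p (mod p^{k+1}); that is, there exists an integer t such that M^U_{p^k} = p + p^{k+1}·t. -/

import Mathlib

/-!
Put `n = p ^ (k - 1)`. The multiplication formula `U_{n i} = U_n · U'_i`, where
`U' = U(V_n, Q^n)` is a Lucas sequence of discriminant `D · U_n²`, gives `M_{p^k} = U'_p`;
moreover `p ∣ D` forces `p ∣ U_p`, hence `p^(k-1) ∣ U_n`, so `p^(2k-1)` divides the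
discriminant of `U'`.

Modulo the square of the discriminant, `2^(p-1) U_p ≡ p P^(p-1) + C(p,3) P^(p-3) D`. For `U'`
the correction term vanishes modulo `p^(k+1)` (for `p = 3` only when `k ≥ 2`, since `C(3,3) = 1`),
and `V_n^(p-1) ≡ (4 Q^n)^((p-1)/2) = 2^(p-1) (Q^((p-1)/2))^(p^(k-1))`. Finally `4Q ≡ P²` with
`p ∤ P` makes `Q` a nonzero square mod `p`, so `Q^((p-1)/2) ≡ 1 (mod p)`, and raising to the
power `p^(k-1)` lifts this to `p^k`. Hence `U'_p ≡ p (mod p^(k+1))`.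
-/

/-- Lucas sequence of the first kind: `U 0 = 0`, `U 1 = 1`,
`U (n+2) = P * U (n+1) - Q * U n`. -/
def lucasU (P Q : ℤ) : ℕ → ℤ
  | 0 => 0
  | 1 => 1
  | n + 2 => P * lucasU P Q (n + 1) - Q * lucasU P Q n

/-- Möbius dual of the Lucas sequence of the first kind:
`M^U_n = ∏_{d ∣ n} U_d ^ μ(n/d)`, as a rational number. -/
def mobiusDualU (P Q : ℤ) (n : ℕ) : ℚ :=
  ∏ d ∈ n.divisors, (lucasU P Q d : ℚ) ^ (ArithmeticFunction.moebius (n / d))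

section Lucas

variable (P Q : ℤ)

lemma lucasU_add_two (n : ℕ) :
    lucasU P Q (n + 2) = P * lucasU P Q (n + 1) - Q * lucasU P Q n := rfl

lemma lucasU_add (m : ℕ) : ∀ n : ℕ, lucasU P Q (m + n + 1) =
    lucasU P Q (m + 1) * lucasU P Q (n + 1) - Q * lucasU P Q m * lucasU P Q n
  | 0 => by simp [lucasU]
  | 1 => by simp [lucasU]; ring
  | n + 2 => by
      rw [show m + (n + 2) + 1 = m + n + 1 + 2 by omega, lucasU_add_two,
        show m + n + 1 + 1 = m + (n + 1) + 1 by omega, lucasU_add m (n + 1), lucasU_add m n,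
        lucasU_add_two P Q (n + 1), lucasU_add_two P Q n]
      ring

lemma lucasU_cassini : ∀ n : ℕ,
    lucasU P Q (n + 2) * lucasU P Q n - lucasU P Q (n + 1) ^ 2 = -Q ^ n
  | 0 => by simp [lucasU]
  | n + 1 => by
      have h := lucasU_cassini n
      rw [lucasU_add_two P Q (n + 1), lucasU_add_two P Q n] at *
      linear_combination Q * h

/-- The companion Lucas sequence `V(P, Q)`, `V_n = αⁿ + βⁿ`. -/
def lucasV (n : ℕ) : ℤ := 2 * lucasU P Q (n + 1) - P * lucasU P Q n

lemma lucasV_sq_sub (n : ℕ) :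
    lucasV P Q n ^ 2 - 4 * Q ^ n = (P ^ 2 - 4 * Q) * lucasU P Q n ^ 2 := by
  have h := lucasU_cassini P Q n
  rw [lucasU_add_two] at h
  unfold lucasV
  linear_combination (-4) * h

lemma lucasU_add_two_mul (n : ℕ) : ∀ a : ℕ,
    lucasU P Q (a + 2 * n) = lucasV P Q n * lucasU P Q (a + n) - Q ^ n * lucasU P Q a
  | 0 => by
      rcases n with _ | m
      · simp [lucasU]
      · have h := lucasU_add P Q m (m + 1)
        rw [show m + (m + 1) + 1 = 2 * (m + 1) by ring, lucasU_add_two] at h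
        rw [zero_add, zero_add, h, lucasV, lucasU_add_two]
        simp only [lucasU]
        ring
  | 1 => by
      have h := lucasU_add P Q n n
      have hc := lucasU_cassini P Q n
      rw [lucasU_add_two] at hc
      rw [show 1 + 2 * n = n + n + 1 by ring, h, add_comm 1 n, lucasV]
      simp only [lucasU]
      linear_combination hc
  | a + 2 => by
      rw [show a + 2 + 2 * n = a + 2 * n + 2 by ring, lucasU_add_two,
        show a + 2 * n + 1 = a + 1 + 2 * n by ring, lucasU_add_two_mul n (a + 1),
        lucasU_add_two_mul n a, show a + 2 + n = a + n + 2 by ring, lucasU_add_two,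
        show a + n + 1 = a + 1 + n by ring, lucasU_add_two]
      ring

lemma lucasU_mul (n : ℕ) : ∀ i : ℕ,
    lucasU P Q (n * i) = lucasU P Q n * lucasU (lucasV P Q n) (Q ^ n) i
  | 0 => by simp [lucasU]
  | 1 => by simp [lucasU]
  | i + 2 => by
      rw [show n * (i + 2) = n * i + 2 * n by ring, lucasU_add_two_mul,
        show n * i + n = n * (i + 1) by ring, lucasU_mul n (i + 1), lucasU_mul n i,
        lucasU_add_two]
      ring

-- The first two terms of `2^(n+2) U_(n+3) = ∑ⱼ C(n+3, 2j+1) P^(n+2-2j) (P² - 4Q)^j`.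
lemma sq_sub_dvd_two_pow_mul_lucasU : ∀ n : ℕ,
    (P ^ 2 - 4 * Q) ^ 2 ∣ 2 ^ (n + 2) * lucasU P Q (n + 3)
      - (((n : ℤ) + 3) * P ^ (n + 2) + ((n + 3).choose 3 : ℤ) * P ^ n * (P ^ 2 - 4 * Q))
  | 0 => ⟨0, by simp [lucasU]; ring⟩
  | 1 => ⟨0, by simp [lucasU, Nat.choose]; ring⟩
  | n + 2 => by
      obtain ⟨a, ha⟩ := sq_sub_dvd_two_pow_mul_lucasU n
      obtain ⟨b, hb⟩ := sq_sub_dvd_two_pow_mul_lucasU (n + 1)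
      have hchoose : ((n + 5).choose 3 : ℤ) + ((n + 3).choose 3 : ℤ)
          = 2 * ((n + 4).choose 3 : ℤ) + ((n : ℤ) + 3) := by
        norm_cast
        simp only [Nat.choose_succ_succ', Nat.choose_one_right, Nat.choose_zero_right, zero_add]
        omega
      refine ⟨2 * P * b - 4 * Q * a + ((n + 3).choose 3 : ℤ) * P ^ n, ?_⟩
      rw [show n + 2 + 3 = n + 3 + 2 by ring, lucasU_add_two]
      simp only [show n + 3 + 1 = n + 1 + 3 by ring] at hb ⊢
      push_cast at ha hb ⊢
      linear_combination (2 * P) * hb - 4 * Q * ha - (P ^ (n + 2) * (P ^ 2 - 4 * Q)) * hchoose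

lemma two_pow_mul_lucasU_modEq {n : ℕ} (hn : 3 ≤ n) {m : ℤ}
    (hchoose : m ∣ n.choose 3 * (P ^ 2 - 4 * Q)) (hsq : m ∣ (P ^ 2 - 4 * Q) ^ 2) :
    2 ^ (n - 1) * lucasU P Q n ≡ n * P ^ (n - 1) [ZMOD m] := by
  obtain ⟨n, rfl⟩ := Nat.exists_eq_add_of_le' hn
  have hexpand := (Int.modEq_iff_dvd.2 (sq_sub_dvd_two_pow_mul_lucasU P Q n)).symm
  have hsecond : (n + 3).choose 3 * P ^ n * (P ^ 2 - 4 * Q) ≡ 0 [ZMOD m] :=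
    Int.modEq_zero_iff_dvd.2 (by rw [mul_right_comm]; exact dvd_mul_of_dvd_left hchoose _)
  rw [show n + 3 - 1 = n + 2 by omega]
  push_cast
  calc 2 ^ (n + 2) * lucasU P Q (n + 3)
      ≡ (n + 3) * P ^ (n + 2) + (n + 3).choose 3 * P ^ n * (P ^ 2 - 4 * Q) [ZMOD m] :=
        hexpand.of_dvd hsq
    _ ≡ (n + 3) * P ^ (n + 2) + 0 [ZMOD m] := hsecond.add_left _
    _ = (n + 3) * P ^ (n + 2) := add_zero _

end Lucas

lemma Nat.Prime.three_le_of_odd {p : ℕ} (hp : p.Prime) (hodd : Odd p) : 3 ≤ p := by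
  obtain ⟨j, rfl⟩ := hodd
  have := hp.two_le
  omega

lemma isCoprime_two_of_odd {p : ℕ} (hodd : Odd p) : IsCoprime (2 : ℤ) p :=
  Nat.isCoprime_iff_coprime.2 (Nat.coprime_two_left.2 hodd)

lemma prime_dvd_lucasU_self (P Q : ℤ) {p : ℕ} (hp : p.Prime) (hodd : Odd p)
    (hD : (p : ℤ) ∣ P ^ 2 - 4 * Q) : (p : ℤ) ∣ lucasU P Q p := by
  have h := two_pow_mul_lucasU_modEq P Q (hp.three_le_of_odd hodd)
    (dvd_mul_of_dvd_right hD _) (dvd_pow hD two_ne_zero)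
  have hzero : (p : ℤ) * P ^ (p - 1) ≡ 0 [ZMOD p] :=
    Int.modEq_zero_iff_dvd.2 (dvd_mul_right _ _)
  exact (isCoprime_two_of_odd hodd).pow_left.symm.dvd_of_dvd_mul_left
    (Int.modEq_zero_iff_dvd.1 (h.trans hzero))

lemma pow_dvd_lucasU_pow (P Q : ℤ) {p : ℕ} (hp : p.Prime) (hodd : Odd p)
    (hD : (p : ℤ) ∣ P ^ 2 - 4 * Q) : ∀ K : ℕ, (p : ℤ) ^ K ∣ lucasU P Q (p ^ K)
  | 0 => by simp [lucasU]
  | K + 1 => by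
      rw [pow_succ, pow_succ, lucasU_mul]
      refine mul_dvd_mul (pow_dvd_lucasU_pow P Q hp hodd hD K)
        (prime_dvd_lucasU_self _ _ hp hodd ?_)
      rw [lucasV_sq_sub]
      exact dvd_mul_of_dvd_left hD _

lemma pow_div_two_modEq_one {P Q : ℤ} {p : ℕ} (hp : p.Prime) (hodd : Odd p)
    (hsq : P ^ 2 ≡ 4 * Q [ZMOD p]) (hP : IsCoprime P p) : Q ^ (p / 2) ≡ 1 [ZMOD p] := by
  have htwo : 2 * (p / 2) = p - 1 := Nat.two_mul_odd_div_two (Nat.odd_iff.1 hodd)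
  have hfour : (4 : ℤ) ^ (p / 2) ≡ 1 [ZMOD p] := by
    rw [show (4 : ℤ) = 2 ^ 2 by norm_num, ← pow_mul, htwo]
    exact Int.ModEq.pow_card_sub_one_eq_one hp (isCoprime_two_of_odd hodd)
  calc Q ^ (p / 2) = 1 * Q ^ (p / 2) := (one_mul _).symm
    _ ≡ 4 ^ (p / 2) * Q ^ (p / 2) [ZMOD p] := hfour.symm.mul_right _
    _ = (4 * Q) ^ (p / 2) := (mul_pow _ _ _).symm
    _ ≡ (P ^ 2) ^ (p / 2) [ZMOD p] := (hsq.pow _).symm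
    _ = P ^ (p - 1) := by rw [← pow_mul, htwo]
    _ ≡ 1 [ZMOD p] := Int.ModEq.pow_card_sub_one_eq_one hp hP

lemma two_pow_mul_lucasU_prime_modEq (P Q : ℤ) {p : ℕ} (hp : p.Prime) (hodd : Odd p)
    {K : ℕ} (hD : (p : ℤ) ^ (2 * K + 1) ∣ P ^ 2 - 4 * Q) (hK : p = 3 → 1 ≤ K) :
    2 ^ (p - 1) * lucasU P Q p ≡ p * (4 * Q) ^ (p / 2) [ZMOD p ^ (K + 2)] := by
  have hp3 := hp.three_le_of_odd hodd
  have hchoose : (p : ℤ) ^ (K + 2) ∣ p.choose 3 * (P ^ 2 - 4 * Q) := by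
    rcases eq_or_ne p 3 with rfl | hne
    · simpa using (pow_dvd_pow _ (by omega)).trans hD
    · have hdvd : p ∣ p.choose 3 := hp.dvd_choose_self (by norm_num) (by omega)
      rw [pow_succ']
      exact mul_dvd_mul (Int.natCast_dvd_natCast.2 hdvd) ((pow_dvd_pow _ (by omega)).trans hD)
  have hsq : (p : ℤ) ^ (K + 2) ∣ (P ^ 2 - 4 * Q) ^ 2 :=
    (pow_dvd_pow _ (by omega)).trans (pow_mul (p : ℤ) (2 * K + 1) 2 ▸ pow_dvd_pow_of_dvd hD 2)
  have hpow : P ^ (p - 1) ≡ (4 * Q) ^ (p / 2) [ZMOD p ^ (2 * K + 1)] := by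
    rw [← Nat.two_mul_odd_div_two (Nat.odd_iff.1 hodd), pow_mul]
    exact (Int.modEq_iff_dvd.2 hD).symm.pow _
  calc 2 ^ (p - 1) * lucasU P Q p ≡ p * P ^ (p - 1) [ZMOD p ^ (K + 2)] :=
        two_pow_mul_lucasU_modEq P Q hp3 hchoose hsq
    _ ≡ p * (4 * Q) ^ (p / 2) [ZMOD p ^ (K + 2)] :=
        hpow.mul_left'.of_dvd (by rw [← pow_succ']; exact pow_dvd_pow _ (by omega))

lemma lucasU_lucasV_prime_pow_modEq (P Q : ℤ) {p : ℕ} (hp : p.Prime) (hodd : Odd p)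
    (hD : (p : ℤ) ∣ P ^ 2 - 4 * Q) (hP : ¬ (p : ℤ) ∣ P) (K : ℕ)
    (hK : p = 3 → 1 ≤ K) :
    lucasU (lucasV P Q (p ^ K)) (Q ^ p ^ K) p ≡ p [ZMOD p ^ (K + 2)] := by
  have hD' : (p : ℤ) ^ (2 * K + 1) ∣ lucasV P Q (p ^ K) ^ 2 - 4 * Q ^ p ^ K := by
    rw [lucasV_sq_sub, pow_succ', pow_mul']
    exact mul_dvd_mul hD (pow_dvd_pow_of_dvd (pow_dvd_lucasU_pow P Q hp hodd hD K) 2)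
  have hQ : Q ^ (p / 2) ≡ 1 [ZMOD p] :=
    pow_div_two_modEq_one hp hodd (Int.modEq_iff_dvd.2 hD).symm
      ((Nat.prime_iff_prime_int.1 hp).coprime_iff_not_dvd.2 hP).symm
  have hlift : (Q ^ (p / 2)) ^ p ^ K ≡ 1 [ZMOD p ^ (K + 1)] := by
    have := dvd_sub_pow_of_dvd_sub (Int.modEq_iff_dvd.1 hQ.symm) K
    rw [one_pow] at this
    exact (Int.modEq_iff_dvd.2 this).symm
  have hfour : (4 * Q ^ p ^ K) ^ (p / 2) = 2 ^ (p - 1) * (Q ^ (p / 2)) ^ p ^ K := by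
    rw [mul_pow, ← pow_mul, ← pow_mul, mul_comm (p ^ K), pow_mul Q,
      show (4 : ℤ) = 2 ^ 2 by norm_num, ← pow_mul, Nat.two_mul_odd_div_two (Nat.odd_iff.1 hodd)]
  have hcoef : p * (4 * Q ^ p ^ K) ^ (p / 2) ≡ 2 ^ (p - 1) * p [ZMOD p ^ (K + 2)] := by
    have := (hlift.mul_left' (c := (p : ℤ))).mul_left (2 ^ (p - 1))
    rwa [mul_one, ← pow_succ', mul_left_comm, ← hfour] at this
  have h := (two_pow_mul_lucasU_prime_modEq _ _ hp hodd hD' hK).trans hcoef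
  rw [Int.modEq_iff_dvd, ← mul_sub] at h
  exact Int.modEq_iff_dvd.2 ((isCoprime_two_of_odd hodd).pow.symm.dvd_of_dvd_mul_left h)

lemma mobiusDualU_prime_pow_succ (P Q : ℤ) {p : ℕ} (hp : p.Prime) (K : ℕ) :
    mobiusDualU P Q (p ^ (K + 1)) = lucasU P Q (p ^ (K + 1)) / lucasU P Q (p ^ K) := by
  rw [mobiusDualU, Nat.divisors_prime_pow hp, Finset.prod_map, Finset.prod_range_succ,
    Finset.prod_range_succ, Finset.prod_eq_one]
  · simp [Nat.pow_div, hp.pos, ArithmeticFunction.moebius_apply_prime hp, div_eq_inv_mul]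
  · intro i hi
    rw [Finset.mem_range] at hi
    simp [Nat.pow_div hi.le.step hp.pos,
      ArithmeticFunction.moebius_apply_prime_pow hp (by omega : K + 1 - i ≠ 0),
      show K + 1 - i ≠ 1 by omega]

lemma not_dvd_of_dvd_sq_sub {P Q : ℤ} {p : ℕ} (hodd : Odd p) (hD : (p : ℤ) ∣ P ^ 2 - 4 * Q)
    (hPQ : ¬ p ∣ Int.gcd P Q) : ¬ (p : ℤ) ∣ P := by
  intro hP
  have h4Q : (p : ℤ) ∣ 2 ^ 2 * Q := by
    rw [show (2 : ℤ) ^ 2 * Q = P ^ 2 - (P ^ 2 - 4 * Q) by ring]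
    exact (dvd_pow hP two_ne_zero).sub hD
  have hQ : (p : ℤ) ∣ Q := (isCoprime_two_of_odd hodd).pow_left.symm.dvd_of_dvd_mul_left h4Q
  exact hPQ (Int.natCast_dvd_natCast.1 (Int.dvd_coe_gcd hP hQ))

theorem stmt_2_general (P Q : ℤ)
    (hnd : ∀ m : ℕ, 1 ≤ m → lucasU P Q m ≠ 0)
    (p : ℕ) (hp : p.Prime) (hodd : Odd p) (hpD : (p : ℤ) ∣ (P ^ 2 - 4 * Q))
    (hpPQ : ¬ p ∣ Int.gcd P Q)
    (k : ℕ) (hk : 1 ≤ k) (hk3 : p = 3 → 2 ≤ k) :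
    ∃ t : ℤ, mobiusDualU P Q (p ^ k) = (p : ℚ) + (p : ℚ) ^ (k + 1) * (t : ℚ) := by
  obtain ⟨K, rfl⟩ : ∃ K, k = K + 1 := ⟨k - 1, by omega⟩
  have hcongr := lucasU_lucasV_prime_pow_modEq P Q hp hodd hpD
    (not_dvd_of_dvd_sq_sub hodd hpD hpPQ) K (fun h => by have := hk3 h; omega)
  obtain ⟨t, ht⟩ := Int.modEq_iff_dvd.1 hcongr.symm
  have hU : (lucasU P Q (p ^ K) : ℚ) ≠ 0 := by exact_mod_cast hnd _ (Nat.one_le_pow _ _ hp.pos)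
  refine ⟨t, ?_⟩
  rw [mobiusDualU_prime_pow_succ P Q hp, pow_succ, lucasU_mul, Int.cast_mul,
    mul_div_cancel_left₀ _ hU, eq_add_of_sub_eq' ht]
  push_cast
  ring

theorem stmt_2 (P Q : ℤ) (hP : P ≠ 0) (hQ : Q ≠ 0) (hD : P ^ 2 - 4 * Q ≠ 0)
    (hnd : ∀ m : ℕ, 1 ≤ m → lucasU P Q m ≠ 0)
    (p : ℕ) (hp : p.Prime) (hodd : Odd p) (hpD : (p : ℤ) ∣ (P ^ 2 - 4 * Q))
    (hpPQ : ¬ p ∣ Int.gcd P Q)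
    (k : ℕ) (hk : 1 ≤ k) (hk3 : p = 3 → 2 ≤ k) :
    ∃ t : ℤ, mobiusDualU P Q (p ^ k) = (p : ℚ) + (p : ℚ) ^ (k + 1) * (t : ℚ) :=
  stmt_2_general P Q hnd p hp hodd hpD hpPQ k hk hk3
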